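/- An evolution algebra whose structure matrix A is strictly upper triangular (a_{ij} = 0 for j ≤ i) is right nilpotent: there exists s with E^{<s>} = 0, where E^{<1>} = E and E^{<k+1>} = E^{<k>}·E. -/

import Mathlib

variable (K : Type*) [Field K] (E : Type*) [NonUnitalNonAssocRing E]
  [Module K E] [SMulCommClass K E E] [IsScalarTower K E E]

/-- The right powers `E^{<k>}` of the algebra: `rightPow K E 0 = E^{<1>} = E`,
`rightPow K E k = E^{<k+1>} = E^{<k>}·E` (the span of products). -/
def rightPow : ℕ → Submodule K E
  | 0 => ⊤
  | k + 1 => Submodule.span K {z : E | ∃ x ∈ rightPow k, ∃ y : E, z = x * y}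

/-!
The subspaces `S m` spanned by the basis vectors `b j` with `j ≥ m` form a descending chain from
`S 0 = E` to `S n = 0`. Since the basis is an evolution basis, `b i * y` is a multiple of `b i * b i`,
which by strict upper triangularity lies in `S (i + 1)`; hence `S m · E ⊆ S (m + 1)`, and by induction
`E^{<k+1>} ⊆ S k`, so `E^{<n+1>} = 0`.
-/

theorem rightPow_le_of_mul_mem {K E : Type*} [Field K] [NonUnitalNonAssocRing E] [Module K E]
    [SMulCommClass K E E] [IsScalarTower K E E] {S : ℕ → Submodule K E} (h0 : S 0 = ⊤)
    (hmul : ∀ m, ∀ x ∈ S m, ∀ y : E, x * y ∈ S (m + 1)) (k : ℕ) : rightPow K E k ≤ S k := by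
  induction k with
  | zero => rw [rightPow, h0]
  | succ k ih =>
    rw [rightPow, Submodule.span_le]
    rintro _ ⟨x, hx, y, rfl⟩
    exact hmul k x (ih hx) y

namespace Module.Basis

variable {R A : Type*} [Semiring R]

theorem mul_eq_repr_smul_mul_self {ι : Type*} [Fintype ι] [NonUnitalNonAssocSemiring A]
    [Module R A] [SMulCommClass R A A] (b : Module.Basis ι R A)
    (hmul0 : ∀ i j, i ≠ j → b i * b j = 0) (i : ι) (y : A) :
    b i * y = b.repr y i • (b i * b i) := by
  classical
  conv_lhs => rw [← b.sum_repr y]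
  rw [Finset.mul_sum, Finset.sum_eq_single i
    (fun j _ hj => by rw [mul_smul_comm, hmul0 i j hj.symm, smul_zero]) (by simp), mul_smul_comm]

section TailSpan

variable {n : ℕ}

section AddCommMonoid

variable [AddCommMonoid A] [Module R A] (b : Module.Basis (Fin n) R A)

def tailSpan (m : ℕ) : Submodule R A :=
  Submodule.span R (b '' {j | m ≤ (j : ℕ)})

theorem tailSpan_zero : b.tailSpan 0 = ⊤ := by
  simp [tailSpan, b.span_eq]

theorem tailSpan_self : b.tailSpan n = ⊥ := by
  simp [tailSpan, Fin.is_lt]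

theorem tailSpan_antitone : Antitone b.tailSpan :=
  fun _ _ hml => Submodule.span_mono (Set.image_mono fun _ hj => le_trans hml hj)

end AddCommMonoid

variable [NonUnitalNonAssocSemiring A] [Module R A] (b : Module.Basis (Fin n) R A)

theorem mul_self_mem_tailSpan_of_upperTriangular (a : Matrix (Fin n) (Fin n) R)
    (hsq : ∀ i, b i * b i = ∑ k, a i k • b k) (htri : ∀ i j : Fin n, j ≤ i → a i j = 0)
    (i : Fin n) : b i * b i ∈ b.tailSpan (i + 1) := by
  rw [hsq]
  refine Submodule.sum_mem _ fun k _ => ?_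
  by_cases hki : k ≤ i
  · simp [htri i k hki]
  · exact Submodule.smul_mem _ _ (Submodule.subset_span ⟨k, Nat.succ_le_of_lt (not_le.1 hki), rfl⟩)

theorem mul_mem_tailSpan_succ [SMulCommClass R A A] [IsScalarTower R A A]
    (hmul0 : ∀ i j, i ≠ j → b i * b j = 0)
    (hsq : ∀ i : Fin n, b i * b i ∈ b.tailSpan (i + 1)) {m : ℕ} {x : A} (hx : x ∈ b.tailSpan m)
    (y : A) : x * y ∈ b.tailSpan (m + 1) := by
  induction hx using Submodule.span_induction with
  | mem _ hz =>
    obtain ⟨i, hmi, rfl⟩ := hz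
    rw [b.mul_eq_repr_smul_mul_self hmul0]
    exact Submodule.smul_mem _ _ (b.tailSpan_antitone (Nat.succ_le_succ hmi) (hsq i))
  | zero => simp
  | add u v _ _ hu hv => rw [add_mul]; exact Submodule.add_mem _ hu hv
  | smul c u _ hu => rw [smul_mul_assoc]; exact Submodule.smul_mem _ _ hu

end TailSpan

end Module.Basis

/-- An evolution algebra with strictly upper triangular structure matrix is
right nilpotent: some right power `E^{<s>}` vanishes. -/
theorem stmt7 {K : Type*} [Field K] {E : Type*} [NonUnitalNonAssocRing E]
    [Module K E] [SMulCommClass K E E] [IsScalarTower K E E]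
    {n : ℕ} (b : Module.Basis (Fin n) K E) (a : Matrix (Fin n) (Fin n) K)
    (hmul0 : ∀ i j, i ≠ j → b i * b j = 0)
    (hsq : ∀ i, b i * b i = ∑ k, a i k • b k)
    (htri : ∀ i j : Fin n, j ≤ i → a i j = 0) :
    ∃ s : ℕ, rightPow K E s = ⊥ := by
  have hchain := rightPow_le_of_mul_mem b.tailSpan_zero
    (fun _ _ hx y => b.mul_mem_tailSpan_succ hmul0
      (b.mul_self_mem_tailSpan_of_upperTriangular a hsq htri) hx y) n
  exact ⟨n, le_bot_iff.1 (b.tailSpan_self ▸ hchain)⟩
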